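/- arXiv:2401.10360 — 3 statements merged into one kernel-verified Lean document; each statement's English description precedes it below -/
import Mathlib

section
/- If x ∈ {0,1} is sampled with P[x=1]=p and the same uniform random variable k ∈ [0,1] is used to sample x (x = 1 iff k ≤ p), then the expectation of s(x,k) equals 1 + ln(2)·H(p), where H(p) = -p·log₂(p) - (1-p)·log₂(1-p) is the binary entropy. -/
/-!
Split `(0, 1)` at `p`. For `k ≤ p` the score is `-log k`, for `k > p` it is `-log (1 - k)`, and
`x - x log x` is an antiderivative of `-log x` vanishing at `0`. The two pieces therefore contribute
`p - p log p` and `(1 - p) - (1 - p) log (1 - p)`, which add up to `1` plus the entropy in nats.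
-/

open MeasureTheory

/-- The score `s(x,k)`: `ln(1/k)` if `x = 1` and `ln(1/(1-k))` if `x = 0`. -/
noncomputable def score (x : Bool) (k : ℝ) : ℝ :=
  if x then Real.log (1 / k) else Real.log (1 / (1 - k))

/-- Binary Shannon entropy in bits. -/
noncomputable def binEntropy (p : ℝ) : ℝ :=
  -(p * Real.logb 2 p) - (1 - p) * Real.logb 2 (1 - p)

section

open Real Set intervalIntegral

lemma log_two_mul_binEntropy (p : ℝ) : log 2 * _root_.binEntropy p = Real.binEntropy p := by
  have hlog2 : log 2 ≠ 0 := (log_pos one_lt_two).ne'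
  simp only [_root_.binEntropy, Real.binEntropy, logb, log_inv]
  field_simp
  ring

lemma eqOn_score_decide_le_Iic (p : ℝ) :
    EqOn (fun k => score (decide (k ≤ p)) k) (fun k => -log k) (Iic p) := by
  intro k hk
  simp [score, mem_Iic.mp hk, log_inv]

lemma eqOn_score_decide_le_Ioi (p : ℝ) :
    EqOn (fun k => score (decide (k ≤ p)) k) (fun k => -log (1 - k)) (Ioi p) := by
  intro k hk
  simp [score, not_le.mpr (mem_Ioi.mp hk), log_inv]

lemma intervalIntegrable_log_one_sub (a b : ℝ) :
    IntervalIntegrable (fun x => log (1 - x)) volume a b := by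
  simpa using (intervalIntegrable_log' (a := 1 - a) (b := 1 - b)).comp_sub_left 1

lemma integral_log_one_sub (a b : ℝ) :
    ∫ x in a..b, log (1 - x) =
      (1 - a) * log (1 - a) - (1 - b) * log (1 - b) - (1 - a) + (1 - b) := by
  rw [integral_comp_sub_left (fun x => log x), integral_log]

end

open Set intervalIntegral

/-- If `x = 1` iff `k ≤ p` for `k` uniform on `[0,1]`, then the expectation of
`s(x,k)` (with the same `k` used both to sample `x` and in the score) equals
`1 + ln 2 · H(p)`. -/
theorem expectation_score_correlated (p : ℝ) (hp : p ∈ Set.Icc (0 : ℝ) 1) :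
    ∫ k in Set.Ioo (0 : ℝ) 1, score (decide (k ≤ p)) k
      = 1 + Real.log 2 * binEntropy p := by
  obtain ⟨hp0, hp1⟩ := hp
  have left : EqOn (fun k => score (decide (k ≤ p)) k) (fun k => -Real.log k) (uIoo 0 p) :=
    (eqOn_score_decide_le_Iic p).mono <|
      uIoo_of_le hp0 ▸ Ioo_subset_Iio_self.trans Iio_subset_Iic_self
  have right : EqOn (fun k => score (decide (k ≤ p)) k) (fun k => -Real.log (1 - k)) (uIoo p 1) :=
    (eqOn_score_decide_le_Ioi p).mono (uIoo_of_le hp1 ▸ Ioo_subset_Ioi_self)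
  rw [← integral_Ioc_eq_integral_Ioo, ← integral_of_le zero_le_one,
    ← integral_add_adjacent_intervals (intervalIntegrable_log'.neg.congr_uIoo left.symm)
      ((intervalIntegrable_log_one_sub p 1).neg.congr_uIoo right.symm),
    integral_congr_uIoo left, integral_congr_uIoo right, intervalIntegral.integral_neg,
    intervalIntegral.integral_neg, integral_log, integral_log_one_sub, log_two_mul_binEntropy]
  simp only [Real.binEntropy, Real.log_inv, Real.log_zero, mul_zero, sub_zero, add_zero]
  ring
end

section
/- In the dynamic-ECC-with-feedback protocol, if the next transmitted symbol is received correctly, the potential Φ(x,y) := last(x,y) − suff(x,y) increases by exactly 1: Φ(x, y ++ [next(x,y)]) = Φ(x,y) + 1. -/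
/-! Dynamic error correcting code with feedback.
Codeword symbols are `Option Bool`: `some b` is the bit `b`, `none` is the
backspace symbol `←`. -/

/-- `decode` interprets `←` (`none`) as a backspace. -/
def decode (y : List (Option Bool)) : List Bool :=
  y.foldl (fun d s => match s with | some b => d ++ [b] | none => d.dropLast) []

/-- `last(x,y)`: the length of the longest common prefix of `x` and `decode y`,
i.e. the largest `i` with `x[:i] = decode(y)[:i]`. -/
def lastAgree (x : List Bool) (y : List (Option Bool)) : ℕ :=
  ((x.zip (decode y)).takeWhile (fun p => p.1 == p.2)).length

/-- `suff(x,y) = len(decode y) − last(x,y)`, the length of the wrong suffix. -/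
def suff (x : List Bool) (y : List (Option Bool)) : ℕ :=
  (decode y).length - lastAgree x y

/-- The potential `Φ(x,y) = last(x,y) − suff(x,y)` (as an integer). -/
def Phi (x : List Bool) (y : List (Option Bool)) : ℤ :=
  (lastAgree x y : ℤ) - (suff x y : ℤ)

/-- The symbol the sender transmits next: `←` if `suff(x,y) > 0`, and otherwise
the next bit of the message, `x[last(x,y)+1]`. -/
def nextSym (x : List Bool) (y : List (Option Bool)) : Option Bool :=
  if 0 < suff x y then none else some (x.getD (lastAgree x y) false)

/-- The next symbol is well defined: when `suff = 0` the message is not yet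
exhausted. -/
def Sendable (x : List Bool) (y : List (Option Bool)) : Prop :=
  suff x y = 0 → lastAgree x y < x.length

open List

lemma tw_take {α} (p : α → Bool) (l : List α) (n : ℕ) :
    takeWhile p (l.take n) = (takeWhile p l).take n := by
  induction l generalizing n with
  | nil => simp
  | cons a t ih =>
    cases n with
    | zero => simp
    | succ m =>
      by_cases hp : p a
      · simp [takeWhile, hp, ih]
      · simp [takeWhile, hp]

lemma zip_take_right' {α β} (l : List α) (l' : List β) (n : ℕ) :
    l.zip (l'.take n) = (l.zip l').take n := by
  induction l generalizing l' n with
  | nil => simp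
  | cons a t ih =>
    cases l' with
    | nil => simp
    | cons b t' =>
      cases n with
      | zero => simp
      | succ m => simp [zip_cons_cons, ih]

lemma zip_take_left' {α β} (l : List α) (l' : List β) (n : ℕ) :
    (l.take n).zip l' = (l.zip l').take n := by
  induction l generalizing l' n with
  | nil => simp
  | cons a t ih =>
    cases l' with
    | nil => simp
    | cons b t' =>
      cases n with
      | zero => simp
      | succ m => simp [zip_cons_cons, ih]

lemma decode_append_some (y : List (Option Bool)) (b : Bool) :
    decode (y ++ [some b]) = decode y ++ [b] := by
  simp [decode, List.foldl_append]

lemma decode_append_none (y : List (Option Bool)) :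
    decode (y ++ [none]) = (decode y).dropLast := by
  simp [decode, List.foldl_append]

lemma lastAgree_le (x : List Bool) (y : List (Option Bool)) :
    lastAgree x y ≤ min x.length (decode y).length := by
  have h := (takeWhile_prefix (l := x.zip (decode y)) (fun p => p.1 == p.2)).length_le
  simpa [lastAgree] using h

/-- If the next transmitted symbol is received correctly, the potential
increases by exactly one. -/
theorem phi_correct_step (x : List Bool) (y : List (Option Bool))
    (h : Sendable x y) :
    Phi x (y ++ [nextSym x y]) = Phi x y + 1 := by
  have hle := lastAgree_le x y
  set d := decode y with hd
  set k := lastAgree x y with hk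
  have hkL : k = (List.takeWhile (fun p => p.1 == p.2) (x.zip d)).length := by
    rw [hk, lastAgree, ← hd]
  by_cases hpos : 0 < suff x y
  · -- backspace case
    have hklt : k < d.length := by
      simp only [suff, ← hk, ← hd] at hpos; omega
    have hnext : nextSym x y = none := by simp [nextSym, hpos]
    have hdec : decode (y ++ [nextSym x y]) = d.take (d.length - 1) := by
      rw [hnext, decode_append_none, ← hd, dropLast_eq_take]
    have hla : lastAgree x (y ++ [nextSym x y]) = k := by
      rw [lastAgree, hdec, zip_take_right', tw_take, length_take]
      omega
    have hlen : (decode (y ++ [nextSym x y])).length = d.length - 1 := by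
      rw [hdec, length_take]; omega
    simp only [Phi, suff, hla, hlen, ← hk, ← hd]
    omega
  · -- send next bit case
    have hsz : suff x y = 0 := by omega
    have hkd : k = d.length := by
      simp only [suff, ← hk, ← hd] at hsz; omega
    have hkx : k < x.length := h hsz
    have hall : List.takeWhile (fun p => p.1 == p.2) (x.zip d) = x.zip d := by
      apply (takeWhile_prefix _).eq_of_length
      rw [length_zip, ← hkL]
      omega
    have hnext : nextSym x y = some (x.getD k false) := by
      simp [nextSym, hsz, ← hk]
    have hgetD : x.getD k false = x.get ⟨k, hkx⟩ := by
      simp [List.getD_eq_getElem?_getD, List.getElem?_eq_getElem hkx]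
    have hdec : decode (y ++ [nextSym x y]) = d ++ [x.get ⟨k, hkx⟩] := by
      rw [hnext, decode_append_some, ← hd, hgetD]
    have hzip : x.zip (d ++ [x.get ⟨k, hkx⟩])
        = x.zip d ++ [(x.get ⟨k, hkx⟩, x.get ⟨k, hkx⟩)] := by
      have hsplit : (x.take k ++ x.drop k).zip (d ++ [x.get ⟨k, hkx⟩])
          = x.zip d ++ [(x.get ⟨k, hkx⟩, x.get ⟨k, hkx⟩)] := by
        rw [zip_append (by rw [length_take]; omega)]
        congr 1
        · rw [zip_take_left']
          apply take_of_length_le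
          rw [length_zip]; omega
        · rw [List.drop_eq_getElem_cons hkx]
          rw [List.zip_cons_cons, List.zip_nil_right]
          simp [List.get_eq_getElem]
      rw [take_append_drop] at hsplit
      exact hsplit
    have hla : lastAgree x (y ++ [nextSym x y]) = k + 1 := by
      rw [lastAgree, hdec, hzip, takeWhile_append, hall, if_pos rfl]
      simp [length_zip]
      omega
    have hlen : (decode (y ++ [nextSym x y])).length = d.length + 1 := by
      rw [hdec]; simp
    simp only [Phi, suff, hla, hlen, ← hk, ← hd]
    omega
end

section
/- If the n symbols received in the feedback protocol contain e errors (symbols differing from what was sent), then Φ(x,y) ≥ n − 2e, where Φ(x,y) = last(x,y) − suff(x,y). -/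
/-! ### Auxiliary lemmas about common-prefix length -/

def agr (x d : List Bool) : ℕ :=
  ((x.zip d).takeWhile (fun p => p.1 == p.2)).length

@[simp] lemma agr_nil_left (d : List Bool) : agr [] d = 0 := by simp [agr]
@[simp] lemma agr_nil_right (x : List Bool) : agr x [] = 0 := by simp [agr]
@[simp] lemma agr_cons (a b : Bool) (x d : List Bool) :
    agr (a::x) (b::d) = if a = b then agr x d + 1 else 0 := by
  simp only [agr, List.zip, List.zipWith, List.takeWhile]
  split <;> simp_all [agr, List.zip]

lemma agr_le_left (x d : List Bool) : agr x d ≤ x.length := by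
  induction x generalizing d with
  | nil => simp
  | cons a x ih =>
    cases d with
    | nil => simp
    | cons b d => simp only [agr_cons]; split <;> simp [ih, Nat.succ_le_succ]

lemma agr_le_right (x d : List Bool) : agr x d ≤ d.length := by
  induction x generalizing d with
  | nil => simp
  | cons a x ih =>
    cases d with
    | nil => simp
    | cons b d => simp only [agr_cons]; split <;> simp [ih, Nat.succ_le_succ]

lemma agr_take (x d : List Bool) (m : ℕ) : agr x (d.take m) = min m (agr x d) := by
  induction d generalizing x m with
  | nil => simp
  | cons c d ih =>
    cases m with
    | zero => simp
    | succ m =>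
      cases x with
      | nil => simp
      | cons a x =>
        simp only [List.take_succ_cons, agr_cons]
        split
        · rw [ih]; omega
        · simp

lemma agr_append_of_lt (x d : List Bool) (b : Bool) (h : agr x d < d.length) :
    agr x (d ++ [b]) = agr x d := by
  induction d generalizing x with
  | nil => simp at h
  | cons c d ih =>
    cases x with
    | nil => simp
    | cons a x =>
      simp only [List.cons_append, agr_cons] at *
      split
      · rename_i hac
        rw [ih]
        simp [hac] at h
        omega
      · rfl

lemma agr_append_full (x d : List Bool) (b : Bool) (h : agr x d = d.length)
    (hlt : d.length < x.length) :
    agr x (d ++ [b]) = if x.getD d.length false = b then d.length + 1 else d.length := by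
  induction d generalizing x with
  | nil =>
    cases x with
    | nil => simp at hlt
    | cons a x => simp [eq_comm]
  | cons c d ih =>
    cases x with
    | nil => simp at hlt
    | cons a x =>
      simp only [agr_cons] at h
      have hac : a = c := by by_contra hac; simp [hac] at h
      simp only [List.cons_append, agr_cons, hac, if_true, List.length_cons] at *
      rw [ih x (by omega) (by omega)]
      rw [List.getD_cons_succ]
      split <;> omega

lemma decode_concat (y : List (Option Bool)) (s : Option Bool) :
    decode (y ++ [s]) = match s with
      | some b => decode y ++ [b]
      | none => (decode y).dropLast := by
  simp [decode, List.foldl_append]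

lemma lastAgree_eq (x : List Bool) (y : List (Option Bool)) :
    lastAgree x y = agr x (decode y) := rfl

lemma phi_step (x : List Bool) (y : List (Option Bool)) (s : Option Bool)
    (hs : Sendable x y) :
    Phi x y + (if s = nextSym x y then 1 else -1) ≤ Phi x (y ++ [s]) := by
  have hLd : agr x (decode y) ≤ (decode y).length := agr_le_right _ _
  have hLx : agr x (decode y) ≤ x.length := agr_le_left _ _
  by_cases h0 : (decode y).length ≤ agr x (decode y)
  · -- suff = 0
    have hdl : (decode y).length = agr x (decode y) := le_antisymm h0 hLd
    have hsuf : suff x y = 0 := by simp [suff, lastAgree_eq]; omega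
    have hxlt : lastAgree x y < x.length := hs hsuf
    rw [lastAgree_eq] at hxlt
    have hnext : nextSym x y = some (x.getD (agr x (decode y)) false) := by
      simp [nextSym, hsuf, lastAgree_eq]
    cases s with
    | none =>
      have hdec : decode (y ++ [none]) = (decode y).dropLast := decode_concat y none
      have hagr : agr x ((decode y).dropLast) = min ((decode y).length - 1) (agr x (decode y)) := by
        rw [List.dropLast_eq_take, agr_take]
      rw [if_neg (by simp [hnext])]
      simp only [Phi, suff, lastAgree_eq, hdec, hagr, List.length_dropLast]
      omega
    | some b =>
      have hdec : decode (y ++ [some b]) = decode y ++ [b] := decode_concat y (some b)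
      have hagr := agr_append_full x (decode y) b hdl.symm (by omega)
      by_cases hb : x.getD ((decode y).length) false = b
      · have hagr' : agr x (decode y ++ [b]) = (decode y).length + 1 := by
          rw [hagr, if_pos hb]
        have hcond : some b = nextSym x y := by
          rw [hnext, ← hb, hdl]
        rw [if_pos hcond]
        simp only [Phi, suff, lastAgree_eq, hdec, hagr', List.length_append,
          List.length_cons, List.length_nil]
        omega
      · have hagr' : agr x (decode y ++ [b]) = (decode y).length := by
          rw [hagr, if_neg hb]
        have hcond : ¬ (some b = nextSym x y) := by
          simp only [hnext, Option.some.injEq]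
          intro h; exact hb (by rw [hdl]; exact h.symm)
        rw [if_neg hcond]
        simp only [Phi, suff, lastAgree_eq, hdec, hagr', List.length_append,
          List.length_cons, List.length_nil]
        omega
  · -- suff > 0
    have hlt : agr x (decode y) < (decode y).length := by omega
    have hsuf : 0 < suff x y := by simp [suff, lastAgree_eq]; omega
    have hnext : nextSym x y = none := by simp [nextSym, hsuf]
    cases s with
    | none =>
      have hdec : decode (y ++ [none]) = (decode y).dropLast := decode_concat y none
      have hagr : agr x ((decode y).dropLast) = min ((decode y).length - 1) (agr x (decode y)) := by
        rw [List.dropLast_eq_take, agr_take]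
      rw [if_pos (by simp [hnext])]
      simp only [Phi, suff, lastAgree_eq, hdec, hagr, List.length_dropLast]
      omega
    | some b =>
      have hdec : decode (y ++ [some b]) = decode y ++ [b] := decode_concat y (some b)
      have hagr := agr_append_of_lt x (decode y) b hlt
      rw [if_neg (by simp [hnext])]
      simp only [Phi, suff, lastAgree_eq, hdec, hagr, List.length_append,
        List.length_cons, List.length_nil]
      omega

lemma phi_aux (x : List Bool) (y : List (Option Bool))
    (hsend : ∀ i < y.length, Sendable x (y.take i)) :
    (y.length : ℤ) - 2 * (((List.range y.length).filter
      (fun i => y.getD i none ≠ nextSym x (y.take i))).length : ℤ) ≤ Phi x y := by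
  induction y using List.reverseRecOn with
  | nil => simp [Phi, suff, lastAgree, decode]
  | append_singleton ys s ih =>
    have hpre : ∀ i ≤ ys.length, (ys ++ [s]).take i = ys.take i := by
      intro i hi; rw [List.take_append_of_le_length hi]
    have hsend' : ∀ i < ys.length, Sendable x (ys.take i) := by
      intro i hi
      have := hsend i (by simp; omega)
      rwa [hpre i hi.le] at this
    have hS : Sendable x ys := by
      have := hsend ys.length (by simp)
      rwa [hpre _ le_rfl, List.take_length] at this
    have key := phi_step x ys s hS
    have hIH := ih hsend'
    have hlen : (ys ++ [s]).length = ys.length + 1 := by simp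
    rw [hlen, List.range_succ, List.filter_append]
    have hfc : (List.range ys.length).filter
        (fun i => decide ((ys++[s]).getD i none ≠ nextSym x ((ys++[s]).take i))) =
        (List.range ys.length).filter
        (fun i => decide (ys.getD i none ≠ nextSym x (ys.take i))) := by
      apply List.filter_congr
      intro i hi
      have hi' : i < ys.length := List.mem_range.mp hi
      rw [hpre i hi'.le, List.getD_append _ _ _ _ hi']
    rw [hfc]
    have hget : (ys ++ [s]).getD ys.length none = s := by
      simp [List.getD]
    have htake : (ys ++ [s]).take ys.length = ys := by
      rw [hpre _ le_rfl, List.take_length]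
    rw [List.length_append]
    by_cases hc : s = nextSym x ys
    · have : (List.filter (fun i => decide ((ys++[s]).getD i none ≠ nextSym x ((ys++[s]).take i)))
          [ys.length]) = [] := by
        simp [hget, htake, hc]
      rw [this]
      rw [if_pos hc] at key
      simp only [List.length_nil, Nat.add_zero]
      push_cast
      linarith
    · have : (List.filter (fun i => decide ((ys++[s]).getD i none ≠ nextSym x ((ys++[s]).take i)))
          [ys.length]) = [ys.length] := by
        simp [hget, htake, hc]
      rw [this]
      rw [if_neg hc] at key
      simp only [List.length_cons, List.length_nil]
      push_cast
      linarith

/-- If among the `n` symbols received in the feedback protocol exactly `e`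
differ from what the sender sent, then `Φ(x,y) ≥ n − 2e`. -/
theorem phi_ge_of_errors (x : List Bool) (y : List (Option Bool))
    (n e : ℕ) (hn : y.length = n)
    (hsend : ∀ i < n, Sendable x (y.take i))
    (he : ((List.range n).filter
        (fun i => y.getD i none ≠ nextSym x (y.take i))).length = e) :
    (n : ℤ) - 2 * e ≤ Phi x y := by
  subst hn he
  exact phi_aux x y hsend
end
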